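/- arXiv:1108.5802 — 7 statements merged into one kernel-verified Lean document; each statement's English description precedes it below -/
import Mathlib

section
/- Let n be a positive integer and g : ℕ → ℝ be a totally multiplicative arithmetical function (g(1) = 1 and g(ab) = g(a)g(b) for all a, b). Define f(n, m) = g(m) · Σ_{k=1}^{⌊n/m⌋} g(k) for each positive integer m. Then the n×n matrix whose (i,j) entry is f(n, lcm(i,j)) (for 1 ≤ i, j ≤ n) equals Cₙᵀ · diag(g(1), g(2), …, g(n)) · Cₙ, where Cₙ is the n×n matrix with (i,j) entry equal to 1 if j divides i and 0 otherwise. -/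
open Matrix Finset

/-- For a totally multiplicative `g : ℕ → ℝ` and
`f(n, m) = g m * ∑_{k=1}^{⌊n/m⌋} g k`, the matrix `[f(n, lcm(i,j))]` equals
`Cₙᵀ * diag(g 1, …, g n) * Cₙ` where `Cₙ i j = 1` iff `j ∣ i`. -/
theorem stmt_0 (n : ℕ) (hn : 0 < n) (g : ℕ → ℝ)
    (hg1 : g 1 = 1)
    (hgmul : ∀ a b : ℕ, 0 < a → 0 < b → g (a * b) = g a * g b)
    (C : Matrix (Fin n) (Fin n) ℝ)
    (hC : ∀ i j : Fin n, C i j = if (j.1 + 1) ∣ (i.1 + 1) then 1 else 0)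
    (f : ℕ → ℕ → ℝ)
    (hf : ∀ m : ℕ, 0 < m → f n m = g m * ∑ k ∈ Finset.Icc 1 (n / m), g k) :
    (Matrix.of fun i j : Fin n => f n (Nat.lcm (i.1 + 1) (j.1 + 1)))
      = Cᵀ * Matrix.diagonal (fun i : Fin n => g (i.1 + 1)) * C := by
  ext i j
  set a := i.1 + 1 with hadef
  set b := j.1 + 1 with hbdef
  have ha : 0 < a := Nat.succ_pos _
  have hb : 0 < b := Nat.succ_pos _
  set L := Nat.lcm a b with hLdef
  have hL : 0 < L := Nat.lcm_pos ha hb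
  rw [Matrix.of_apply, hf L hL, Matrix.mul_apply]
  simp only [Matrix.mul_diagonal, Matrix.transpose_apply, hC]
  have key : ∀ k : Fin n,
      (if a ∣ (k.1+1) then (1:ℝ) else 0) * g (k.1+1) * (if b ∣ (k.1+1) then 1 else 0)
        = if L ∣ (k.1+1) then g (k.1+1) else 0 := by
    intro k
    have : L ∣ (k.1+1) ↔ a ∣ (k.1+1) ∧ b ∣ (k.1+1) := Nat.lcm_dvd_iff
    split_ifs with h1 h2 h3 h3 h2 <;> simp_all
  rw [Finset.sum_congr rfl (fun k _ => key k)]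
  have h2 : ∑ k : Fin n, (if L ∣ (k.1+1) then g (k.1+1) else 0)
      = ∑ t ∈ Finset.Icc 1 (n / L), g (L * t) := by
    rw [Fin.sum_univ_eq_sum_range (fun k => if L ∣ (k+1) then g (k+1) else 0),
      Finset.sum_ite, Finset.sum_const_zero, add_zero]
    refine (Finset.sum_nbij' (fun t => L * t - 1) (fun k => (k+1)/L) ?_ ?_ ?_ ?_ ?_).symm
    · intro t ht
      simp only [Finset.mem_Icc] at ht
      simp only [Finset.mem_filter, Finset.mem_range]
      have h1 : 1 ≤ L * t := Nat.mul_pos hL ht.1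
      have hle : L * t ≤ n := by rw [mul_comm]; exact (Nat.le_div_iff_mul_le hL).mp ht.2
      constructor
      · omega
      · have : L * t - 1 + 1 = L * t := by omega
        rw [this]; exact Dvd.intro t rfl
    · intro k hk
      simp only [Finset.mem_filter, Finset.mem_range] at hk
      obtain ⟨hk1, d, hd⟩ := hk
      simp only [Finset.mem_Icc]
      constructor
      · have : 0 < (k+1)/L := Nat.div_pos (Nat.le_of_dvd (Nat.succ_pos _) ⟨d, hd⟩) hL
        omega
      · exact Nat.div_le_div_right (by omega)
    · intro t ht
      simp only [Finset.mem_Icc] at ht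
      have h1 : 1 ≤ L * t := Nat.mul_pos hL ht.1
      show (L * t - 1 + 1) / L = t
      have : L * t - 1 + 1 = L * t := by omega
      rw [this, Nat.mul_div_cancel_left t hL]
    · intro k hk
      simp only [Finset.mem_filter, Finset.mem_range] at hk
      obtain ⟨hk1, d, hd⟩ := hk
      show L * ((k + 1) / L) - 1 = k
      rw [hd, Nat.mul_div_cancel_left d hL]
      omega
    · intro t ht
      simp only [Finset.mem_Icc] at ht
      have h1 : 1 ≤ L * t := Nat.mul_pos hL ht.1
      show g (L * t) = g (L * t - 1 + 1)
      have : L * t - 1 + 1 = L * t := by omega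
      rw [this]
  rw [h2]
  rw [Finset.mul_sum]
  refine Finset.sum_congr rfl fun t ht => ?_
  simp only [Finset.mem_Icc] at ht
  exact (hgmul L t hL (by omega)).symm
end

section
/- Let n be a positive integer and g : ℕ → ℝ be a totally multiplicative arithmetical function (g(1) = 1 and g(ab) = g(a)g(b) for all a, b). Define f(n, m) = g(m) · Σ_{k=1}^{⌊n/m⌋} g(k). Then the determinant of the n×n matrix whose (i,j) entry is f(n, lcm(i,j)) equals g(1)·g(2)···g(n). -/
open Matrix Finset

lemma icc_prod_aux (n : ℕ) (g : ℕ → ℝ) :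
    ∏ k ∈ Finset.Icc 1 n, g k = ∏ d ∈ Finset.range n, g (d + 1) := by
  refine Finset.prod_nbij' (fun k => k - 1) (fun d => d + 1) ?_ ?_ ?_ ?_ ?_ <;>
    intro a ha <;> simp_all [Finset.mem_Icc, Finset.mem_range] <;> omega

/-- For a totally multiplicative `g : ℕ → ℝ` and
`f(n, m) = g m * ∑_{k=1}^{⌊n/m⌋} g k`, the determinant of the matrix
`[f(n, lcm(i,j))]_{1 ≤ i,j ≤ n}` equals `g 1 * g 2 * ⋯ * g n`. -/
theorem stmt_1 (n : ℕ) (hn : 0 < n) (g : ℕ → ℝ)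
    (hg1 : g 1 = 1)
    (hgmul : ∀ a b : ℕ, 0 < a → 0 < b → g (a * b) = g a * g b)
    (f : ℕ → ℕ → ℝ)
    (hf : ∀ m : ℕ, 0 < m → f n m = g m * ∑ k ∈ Finset.Icc 1 (n / m), g k) :
    Matrix.det (Matrix.of fun i j : Fin n => f n (Nat.lcm (i.1 + 1) (j.1 + 1)))
      = ∏ k ∈ Finset.Icc 1 n, g k := by
  set B : Matrix (Fin n) (Fin n) ℝ :=
    Matrix.of (fun i d : Fin n => if (i.1 + 1) ∣ (d.1 + 1) then (1 : ℝ) else 0) with hB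
  set D : Matrix (Fin n) (Fin n) ℝ := Matrix.diagonal (fun d : Fin n => g (d.1 + 1)) with hD
  have key : (Matrix.of fun i j : Fin n => f n (Nat.lcm (i.1 + 1) (j.1 + 1)))
      = B * D * Bᵀ := by
    ext i j
    have hL : 0 < Nat.lcm (i.1 + 1) (j.1 + 1) :=
      Nat.pos_of_ne_zero (Nat.lcm_ne_zero (Nat.succ_ne_zero _) (Nat.succ_ne_zero _))
    set L := Nat.lcm (i.1 + 1) (j.1 + 1) with hLdef
    have hRHS : (B * D * Bᵀ) i j
        = ∑ d : Fin n, (if (i.1 + 1) ∣ (d.1 + 1) then (1:ℝ) else 0) * g (d.1 + 1)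
            * (if (j.1 + 1) ∣ (d.1 + 1) then (1:ℝ) else 0) := by
      rw [Matrix.mul_apply]
      refine Finset.sum_congr rfl fun d _ => ?_
      rw [Matrix.mul_diagonal, Matrix.transpose_apply, hB]
      rfl
    rw [Matrix.of_apply, hRHS, hf L hL, Finset.mul_sum]
    have step : ∀ d : Fin n,
        (if (i.1 + 1) ∣ (d.1 + 1) then (1:ℝ) else 0) * g (d.1 + 1)
            * (if (j.1 + 1) ∣ (d.1 + 1) then (1:ℝ) else 0)
        = if L ∣ (d.1 + 1) then g (d.1 + 1) else 0 := by
      intro d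
      by_cases h1 : (i.1 + 1) ∣ (d.1 + 1) <;> by_cases h2 : (j.1 + 1) ∣ (d.1 + 1) <;>
        simp [h1, h2, hLdef, Nat.lcm_dvd_iff]
    rw [Finset.sum_congr rfl (fun d _ => step d)]
    rw [Fin.sum_univ_eq_sum_range (fun d => if L ∣ (d + 1) then g (d + 1) else 0) n]
    rw [← Finset.sum_filter]
    refine Finset.sum_nbij' (fun k => L * k - 1) (fun d => (d + 1) / L) ?_ ?_ ?_ ?_ ?_
    · intro k hk
      simp only [Finset.mem_Icc] at hk
      have h1 : L * k ≤ n := by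
        rw [mul_comm]; exact (Nat.le_div_iff_mul_le hL).mp hk.2
      have h2 : 1 ≤ L * k := Nat.one_le_iff_ne_zero.mpr (Nat.mul_ne_zero (by omega) (by omega))
      simp only [Finset.mem_filter, Finset.mem_range]
      constructor
      · omega
      · have : L * k - 1 + 1 = L * k := by omega
        rw [this]; exact Dvd.intro k rfl
    · intro d hd
      simp only [Finset.mem_filter, Finset.mem_range] at hd
      have hdvd := hd.2
      have hLe : L ≤ d + 1 := Nat.le_of_dvd (Nat.succ_pos _) hdvd
      simp only [Finset.mem_Icc]
      constructor
      · exact (Nat.one_le_div_iff hL).mpr hLe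
      · exact Nat.div_le_div_right (by omega)
    · intro k hk
      simp only [Finset.mem_Icc] at hk
      have h2 : 1 ≤ L * k := Nat.one_le_iff_ne_zero.mpr (Nat.mul_ne_zero (by omega) (by omega))
      show (L * k - 1 + 1) / L = k
      have : L * k - 1 + 1 = L * k := by omega
      rw [this, Nat.mul_div_cancel_left _ hL]
    · intro d hd
      simp only [Finset.mem_filter, Finset.mem_range] at hd
      show L * ((d + 1) / L) - 1 = d
      have : L * ((d + 1) / L) = d + 1 := Nat.mul_div_cancel' hd.2
      omega
    · intro k hk
      simp only [Finset.mem_Icc] at hk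
      have h2 : 1 ≤ L * k := Nat.one_le_iff_ne_zero.mpr (Nat.mul_ne_zero (by omega) (by omega))
      show g L * g k = g (L * k - 1 + 1)
      have h3 : L * k - 1 + 1 = L * k := by omega
      rw [h3, ← hgmul L k hL (by omega)]
  rw [key, Matrix.det_mul, Matrix.det_mul, Matrix.det_transpose]
  have hBtri : B.BlockTriangular id := by
    intro d i hlt
    simp only [id] at hlt
    have : ¬ (d.1 + 1) ∣ (i.1 + 1) := by
      intro h
      have := Nat.le_of_dvd (Nat.succ_pos _) h
      omega
    simp [hB, this]
  have hdetB : B.det = 1 := by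
    rw [Matrix.det_of_upperTriangular hBtri]
    simp [hB]
  have hdetD : D.det = ∏ k ∈ Finset.Icc 1 n, g k := by
    rw [hD, Matrix.det_diagonal, icc_prod_aux n g,
      ← Fin.prod_univ_eq_prod_range (fun d => g (d + 1)) n]
  rw [hdetB, hdetD, one_mul, mul_one]
end

section
/- Let n be a positive integer. The n×n matrix whose (i,j) entry is ⌊n / lcm(i,j)⌋ (for 1 ≤ i, j ≤ n) equals Cₙᵀ · Cₙ, where Cₙ is the n×n matrix with (i,j) entry equal to 1 if j divides i and 0 otherwise. -/
open Matrix Finset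

/-- The matrix `[⌊n / lcm(i,j)⌋]_{1 ≤ i,j ≤ n}` equals `Cₙᵀ * Cₙ`,
where `Cₙ i j = 1` iff `j ∣ i`. -/
theorem stmt_4 (n : ℕ) (hn : 0 < n)
    (C : Matrix (Fin n) (Fin n) ℤ)
    (hC : ∀ i j : Fin n, C i j = if (j.1 + 1) ∣ (i.1 + 1) then 1 else 0) :
    (Matrix.of fun i j : Fin n => ((n / Nat.lcm (i.1 + 1) (j.1 + 1) : ℕ) : ℤ))
      = Cᵀ * C := by
  ext i j
  simp only [Matrix.mul_apply, Matrix.transpose_apply, hC, Matrix.of_apply,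
    ite_mul, one_mul, zero_mul, mul_ite, mul_one, mul_zero, ← ite_and]
  rw [show (fun k : Fin n => if (j.1 + 1) ∣ (k.1 + 1) ∧ (i.1 + 1) ∣ (k.1 + 1) then (1:ℤ) else 0)
      = (fun k : Fin n => if Nat.lcm (i.1+1) (j.1+1) ∣ (k.1 + 1) then (1:ℤ) else 0) from
    funext fun k => by simp only [Nat.lcm_dvd_iff]; exact if_congr and_comm rfl rfl,
    Fin.sum_univ_eq_sum_range (fun e => if Nat.lcm (i.1+1) (j.1+1) ∣ e + 1 then (1:ℤ) else 0) n,
    Finset.sum_boole, Nat.card_multiples]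
end

section
/- Let n be a positive integer. The determinant of the n×n matrix whose (i,j) entry is ⌊n / lcm(i,j)⌋ (for 1 ≤ i, j ≤ n) equals 1. -/
open Matrix Finset

lemma count_aux (d n : ℕ) :
    (∑ k : Fin n, if d ∣ (k.1 + 1) then (1:ℤ) else 0) = (n / d : ℕ) := by
  rw [Fin.sum_univ_eq_sum_range (fun k => if d ∣ (k + 1) then (1:ℤ) else 0)]
  have h1 : (∑ k ∈ Finset.range n, if d ∣ (k + 1) then (1:ℤ) else 0)
      = ∑ m ∈ Finset.Ioc 0 n, if d ∣ m then (1:ℤ) else 0 := by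
    rw [show Finset.Ioc 0 n = Finset.Ico 1 (n+1) from (Finset.Ico_add_one_left_eq_Ioo 0 (n+1)).symm,
      Finset.sum_Ico_eq_sum_range]
    simp [add_comm]
  rw [h1, Finset.sum_boole]
  rw [Nat.Ioc_filter_dvd_card_eq_div]

/-- The determinant of `[⌊n / lcm(i,j)⌋]_{1 ≤ i,j ≤ n}` equals `1`. -/
theorem stmt_5 (n : ℕ) (hn : 0 < n) :
    Matrix.det (Matrix.of fun i j : Fin n =>
      ((n / Nat.lcm (i.1 + 1) (j.1 + 1) : ℕ) : ℤ)) = 1 := by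
  set A : Matrix (Fin n) (Fin n) ℤ :=
    Matrix.of fun i k : Fin n => if (i.1 + 1) ∣ (k.1 + 1) then 1 else 0 with hA
  have key : (Matrix.of fun i j : Fin n =>
      ((n / Nat.lcm (i.1 + 1) (j.1 + 1) : ℕ) : ℤ)) = A * Aᵀ := by
    ext i j
    rw [Matrix.mul_apply]
    have : ∀ k : Fin n, A i k * Aᵀ k j
        = if Nat.lcm (i.1 + 1) (j.1 + 1) ∣ (k.1 + 1) then (1:ℤ) else 0 := by
      intro k
      simp only [hA, Matrix.transpose_apply, Matrix.of_apply, Nat.lcm_dvd_iff]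
      split_ifs with h1 h2 h3 h3 <;> simp_all
    rw [Finset.sum_congr rfl fun k _ => this k, count_aux]
    rfl
  have hAtri : A.BlockTriangular id := by
    intro i j hij
    simp only [hA, Matrix.of_apply, ite_eq_right_iff]
    intro h
    have h2 := Nat.le_of_dvd (Nat.succ_pos _) h
    have h3 : (j:ℕ) < (i:ℕ) := hij
    omega
  have hdetA : A.det = 1 := by
    rw [Matrix.det_of_upperTriangular hAtri]
    simp [hA]
  rw [key, Matrix.det_mul, Matrix.det_transpose, hdetA]
  norm_num
end

section
/- Let n be a positive integer and let λ(m) = (−1)^{Ω(m)} be the Liouville function, where Ω(m) is the number of prime factors of m counted with multiplicity. Then the determinant of the n×n matrix whose (i,j) entry is λ(lcm(i,j)) · Σ_{k=1}^{⌊n/lcm(i,j)⌋} λ(k) equals (−1)^{Ω(1) + Ω(2) + ⋯ + Ω(n)}. -/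
open Matrix Finset

/-- For the Liouville function `λ m = (-1)^(Ω m)`, the determinant
of the matrix with `(i,j)` entry `λ(lcm(i,j)) * ∑_{k=1}^{⌊n/lcm(i,j)⌋} λ k`
equals `(-1)^(Ω 1 + Ω 2 + ⋯ + Ω n)`. -/
theorem stmt_9 (n : ℕ) (hn : 0 < n)
    (lam : ℕ → ℝ)
    (hlam : ∀ m : ℕ, lam m = (-1) ^ (ArithmeticFunction.cardFactors m)) :
    Matrix.det (Matrix.of fun i j : Fin n =>
        lam (Nat.lcm (i.1 + 1) (j.1 + 1))
          * ∑ k ∈ Finset.Icc 1 (n / Nat.lcm (i.1 + 1) (j.1 + 1)), lam k)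
      = (-1 : ℝ) ^ (∑ k ∈ Finset.Icc 1 n, ArithmeticFunction.cardFactors k) := by
  set B : Matrix (Fin n) (Fin n) ℝ :=
    Matrix.of (fun i m : Fin n => if (i.1 + 1) ∣ (m.1 + 1) then (1 : ℝ) else 0) with hB
  set D : Matrix (Fin n) (Fin n) ℝ := Matrix.diagonal (fun m : Fin n => lam (m.1 + 1)) with hD
  have hM : (Matrix.of fun i j : Fin n =>
        lam (Nat.lcm (i.1 + 1) (j.1 + 1))
          * ∑ k ∈ Finset.Icc 1 (n / Nat.lcm (i.1 + 1) (j.1 + 1)), lam k) = B * D * Bᵀ := by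
    ext i j
    set L := Nat.lcm (i.1 + 1) (j.1 + 1) with hL
    have hLpos : 0 < L := Nat.pos_of_ne_zero (Nat.lcm_ne_zero (by omega) (by omega))
    have hRHS : (B * D * Bᵀ) i j = ∑ m : Fin n,
        (if (i.1 + 1) ∣ (m.1 + 1) then (1:ℝ) else 0) * lam (m.1+1)
          * (if (j.1 + 1) ∣ (m.1 + 1) then (1:ℝ) else 0) := by
      simp [Matrix.mul_apply, Matrix.diagonal, Finset.sum_apply, hB, hD, Matrix.transpose_apply,
        Finset.mul_sum, Finset.sum_mul]
    rw [hRHS]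
    have step1 : ∀ m : Fin n,
        (if (i.1 + 1) ∣ (m.1 + 1) then (1:ℝ) else 0) * lam (m.1+1)
          * (if (j.1 + 1) ∣ (m.1 + 1) then (1:ℝ) else 0)
        = if L ∣ (m.1 + 1) then lam (m.1+1) else 0 := by
      intro m
      have hiff : L ∣ (m.1+1) ↔ ((i.1+1) ∣ (m.1+1) ∧ (j.1+1) ∣ (m.1+1)) := Nat.lcm_dvd_iff
      by_cases h1 : (i.1+1) ∣ (m.1+1) <;> by_cases h2 : (j.1+1) ∣ (m.1+1) <;>
        simp [hiff, h1, h2]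
    simp only [step1]
    have hRHS2 : ∑ m : Fin n, (if L ∣ (m.1 + 1) then lam (m.1+1) else 0)
        = ∑ m ∈ (Finset.Icc 1 n).filter (fun m => L ∣ m), lam m := by
      rw [Finset.sum_filter,
        Fin.sum_univ_eq_sum_range (fun x => if L ∣ x + 1 then lam (x+1) else 0)]
      rw [← Finset.Ico_add_one_right_eq_Icc, Finset.sum_Ico_eq_sum_range]
      simp only [Nat.add_sub_cancel]
      exact Finset.sum_congr rfl fun x _ => by rw [Nat.add_comm 1 x]
    rw [hRHS2]
    -- LHS
    show lam L * ∑ k ∈ Finset.Icc 1 (n / L), lam k = _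
    rw [Finset.mul_sum]
    refine Finset.sum_nbij' (fun k => L * k) (fun m => m / L) ?_ ?_ ?_ ?_ ?_
    · intro k hk
      simp only [Finset.mem_Icc] at hk
      simp only [Finset.mem_filter, Finset.mem_Icc]
      refine ⟨⟨Nat.mul_pos hLpos hk.1, ?_⟩, Dvd.intro k rfl⟩
      calc L * k ≤ L * (n / L) := Nat.mul_le_mul_left _ hk.2
        _ ≤ n := Nat.mul_div_le n L
    · intro m hm
      simp only [Finset.mem_filter, Finset.mem_Icc] at hm
      obtain ⟨⟨h1, h2⟩, hd⟩ := hm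
      simp only [Finset.mem_Icc]
      exact ⟨Nat.one_le_div_iff hLpos |>.2 (Nat.le_of_dvd (by omega) hd),
        Nat.div_le_div_right h2⟩
    · intro k hk
      simp only [Finset.mem_Icc] at hk
      exact Nat.mul_div_cancel_left k hLpos
    · intro m hm
      simp only [Finset.mem_filter, Finset.mem_Icc] at hm
      exact Nat.mul_div_cancel' hm.2
    · intro k hk
      simp only [Finset.mem_Icc] at hk
      rw [hlam, hlam, hlam, ArithmeticFunction.cardFactors_mul (by omega) (by omega), pow_add]
  rw [hM, Matrix.det_mul, Matrix.det_mul]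
  have hBtri : B.BlockTriangular id := by
    intro a b hab
    simp only [id_eq] at hab
    simp only [hB, Matrix.of_apply, ite_eq_right_iff]
    intro hd
    exact absurd (Nat.le_of_dvd (by omega) hd) (by omega)
  have hdetB : B.det = 1 := by
    rw [Matrix.det_of_upperTriangular hBtri]
    apply Finset.prod_eq_one
    intro x _
    simp [hB]
  rw [hdetB, Matrix.det_transpose, hdetB, Matrix.det_diagonal]
  simp only [hlam]
  rw [Finset.prod_pow_eq_pow_sum, one_mul, mul_one]
  congr 1
  rw [Fin.sum_univ_eq_sum_range (fun x => ArithmeticFunction.cardFactors (x+1))]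
  rw [← Finset.Ico_add_one_right_eq_Icc, Finset.sum_Ico_eq_sum_range]
  simp only [Nat.add_sub_cancel]
  exact Finset.sum_congr rfl fun x _ => by rw [Nat.add_comm 1 x]
end

section
/- Let n be a positive integer and g : ℕ → ℝ be a totally multiplicative arithmetical function (g(1) = 1 and g(ab) = g(a)g(b) for all a, b). Define f(n, i, j) = Σ_{k=1}^{n} g(k) − g(i)·Σ_{ℓ=1}^{⌊n/i⌋} g(ℓ) − g(j)·Σ_{ℓ=1}^{⌊n/j⌋} g(ℓ) + g(lcm(i,j))·Σ_{k=1}^{⌊n/lcm(i,j)⌋} g(k). Then the n×n matrix whose (i,j) entry is f(n, i, j) (for 1 ≤ i, j ≤ n) equals Dₙᵀ · diag(g(1), g(2), …, g(n)) · Dₙ, where Dₙ is the n×n matrix with (i,j) entry equal to 1 if j does NOT divide i, and 0 if j divides i. -/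
open Matrix Finset

lemma stmt_10_key (g : ℕ → ℝ)
    (hgmul : ∀ a b : ℕ, 0 < a → 0 < b → g (a * b) = g a * g b)
    (m n : ℕ) (hm : 0 < m) :
    ∑ k ∈ Finset.Icc 1 n, (if m ∣ k then g k else 0)
      = g m * ∑ l ∈ Finset.Icc 1 (n / m), g l := by
  rw [Finset.mul_sum, Finset.sum_ite, Finset.sum_const_zero, add_zero]
  refine Finset.sum_nbij' (fun k => k / m) (fun l => m * l) ?_ ?_ ?_ ?_ ?_
  · intro k hk
    simp only [Finset.mem_filter, Finset.mem_Icc] at hk ⊢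
    obtain ⟨⟨h1, h2⟩, hd⟩ := hk
    exact ⟨Nat.one_le_div_iff hm |>.2 (Nat.le_of_dvd h1 hd), Nat.div_le_div_right h2⟩
  · intro l hl
    simp only [Finset.mem_filter, Finset.mem_Icc] at hl ⊢
    refine ⟨⟨Nat.mul_pos hm hl.1, ?_⟩, Dvd.intro l rfl⟩
    calc m * l ≤ m * (n / m) := Nat.mul_le_mul_left m hl.2
    _ ≤ n := Nat.mul_div_le n m
  · intro k hk
    simp only [Finset.mem_filter] at hk
    exact Nat.mul_div_cancel' hk.2
  · intro l _
    exact Nat.mul_div_cancel_left l hm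
  · intro k hk
    simp only [Finset.mem_filter, Finset.mem_Icc] at hk
    conv_lhs => rw [← Nat.mul_div_cancel' hk.2]
    rw [hgmul m (k / m) hm (Nat.div_pos (Nat.le_of_dvd hk.1.1 hk.2) hm)]

/-- For a totally multiplicative `g : ℕ → ℝ` and
`f(n,i,j) = ∑_{k=1}^n g k - g i * ∑_{ℓ=1}^{⌊n/i⌋} g ℓ - g j * ∑_{ℓ=1}^{⌊n/j⌋} g ℓ
+ g(lcm(i,j)) * ∑_{k=1}^{⌊n/lcm(i,j)⌋} g k`, the matrix `[f(n,i,j)]` equals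
`Dₙᵀ * diag(g 1, …, g n) * Dₙ`, where `Dₙ i j = 1` iff `¬ (j ∣ i)`. -/
theorem stmt_10 (n : ℕ) (hn : 0 < n) (g : ℕ → ℝ)
    (hg1 : g 1 = 1)
    (hgmul : ∀ a b : ℕ, 0 < a → 0 < b → g (a * b) = g a * g b)
    (D : Matrix (Fin n) (Fin n) ℝ)
    (hD : ∀ i j : Fin n, D i j = if (j.1 + 1) ∣ (i.1 + 1) then 0 else 1)
    (f : ℕ → ℕ → ℕ → ℝ)
    (hf : ∀ i j : ℕ, 0 < i → 0 < j →
      f n i j = ∑ k ∈ Finset.Icc 1 n, g k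
        - g i * ∑ l ∈ Finset.Icc 1 (n / i), g l
        - g j * ∑ l ∈ Finset.Icc 1 (n / j), g l
        + g (Nat.lcm i j) * ∑ k ∈ Finset.Icc 1 (n / Nat.lcm i j), g k) :
    (Matrix.of fun i j : Fin n => f n (i.1 + 1) (j.1 + 1))
      = Dᵀ * Matrix.diagonal (fun i : Fin n => g (i.1 + 1)) * D := by
  have conv : ∀ F : ℕ → ℝ, ∑ k : Fin n, F (k.1 + 1) = ∑ k ∈ Finset.Icc 1 n, F k := by
    intro F
    rw [Fin.sum_univ_eq_sum_range (fun k => F (k + 1))]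
    refine Finset.sum_nbij' (fun k => k + 1) (fun k => k - 1) ?_ ?_ ?_ ?_ ?_ <;>
      simp only [Finset.mem_range, Finset.mem_Icc] <;> intros <;> first | trivial | omega
  ext i j
  have hlcm : 0 < Nat.lcm (i.1 + 1) (j.1 + 1) :=
    Nat.pos_of_ne_zero (Nat.lcm_ne_zero (by omega) (by omega))
  rw [Matrix.mul_assoc, Matrix.of_apply, Matrix.mul_apply]
  simp only [Matrix.transpose_apply, Matrix.diagonal_mul, hD]
  have step : ∀ k : Fin n,
      (if (i.1 + 1) ∣ (k.1 + 1) then (0:ℝ) else 1) *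
        (g (k.1 + 1) * if (j.1 + 1) ∣ (k.1 + 1) then (0:ℝ) else 1)
      = g (k.1 + 1) - (if (i.1 + 1) ∣ (k.1 + 1) then g (k.1 + 1) else 0)
        - (if (j.1 + 1) ∣ (k.1 + 1) then g (k.1 + 1) else 0)
        + (if Nat.lcm (i.1 + 1) (j.1 + 1) ∣ (k.1 + 1) then g (k.1 + 1) else 0) := by
    intro k
    have hl : Nat.lcm (i.1 + 1) (j.1 + 1) ∣ (k.1 + 1) ↔
        (i.1 + 1) ∣ (k.1 + 1) ∧ (j.1 + 1) ∣ (k.1 + 1) := lcm_dvd_iff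
    by_cases h1 : (i.1 + 1) ∣ (k.1 + 1) <;> by_cases h2 : (j.1 + 1) ∣ (k.1 + 1) <;>
      simp [h1, h2, hl] <;> ring
  rw [Finset.sum_congr rfl fun k _ => step k, Finset.sum_add_distrib,
    Finset.sum_sub_distrib, Finset.sum_sub_distrib]
  have A : ∑ k : Fin n, g (k.1 + 1) = ∑ k ∈ Finset.Icc 1 n, g k := conv g
  have B : ∑ k : Fin n, (if (i.1 + 1) ∣ (k.1 + 1) then g (k.1 + 1) else 0)
      = ∑ k ∈ Finset.Icc 1 n, (if (i.1 + 1) ∣ k then g k else 0) :=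
    conv (fun k => if (i.1 + 1) ∣ k then g k else 0)
  have C : ∑ k : Fin n, (if (j.1 + 1) ∣ (k.1 + 1) then g (k.1 + 1) else 0)
      = ∑ k ∈ Finset.Icc 1 n, (if (j.1 + 1) ∣ k then g k else 0) :=
    conv (fun k => if (j.1 + 1) ∣ k then g k else 0)
  have E : ∑ k : Fin n, (if Nat.lcm (i.1 + 1) (j.1 + 1) ∣ (k.1 + 1) then g (k.1 + 1) else 0)
      = ∑ k ∈ Finset.Icc 1 n, (if Nat.lcm (i.1 + 1) (j.1 + 1) ∣ k then g k else 0) :=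
    conv (fun k => if Nat.lcm (i.1 + 1) (j.1 + 1) ∣ k then g k else 0)
  rw [A, B, C, E, stmt_10_key g hgmul _ n (by omega), stmt_10_key g hgmul _ n (by omega),
    stmt_10_key g hgmul _ n hlcm, hf _ _ (by omega) (by omega)]
end

section
/- Let n be a positive integer. Then the determinant of the n×n matrix whose (i,j) entry is gcd(i,j) (for 1 ≤ i, j ≤ n) equals φ(1)·φ(2)···φ(n), where φ is Euler's totient function. -/
open Matrix Finset

lemma key_sum (g n : ℕ) (hg : 0 < g) (hgn : g ≤ n) :
    ∑ d ∈ Finset.range n, (if (d + 1) ∣ g then (Nat.totient (d + 1) : ℤ) else 0)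
      = (g : ℤ) := by
  rw [← Finset.sum_filter]
  have hset : g.divisors = ((Finset.range n).filter (fun d => (d + 1) ∣ g)).map
      ⟨fun d => d + 1, fun a b hab => by simpa using hab⟩ := by
    ext k
    simp only [Finset.mem_filter, Finset.mem_range, Finset.mem_map,
      Nat.mem_divisors, Function.Embedding.coeFn_mk]
    constructor
    · rintro ⟨hkdvd, -⟩
      have hk : 0 < k := Nat.pos_of_dvd_of_pos hkdvd hg
      have hkle : k ≤ g := Nat.le_of_dvd hg hkdvd
      refine ⟨k - 1, ⟨by omega, ?_⟩, by show k - 1 + 1 = k; omega⟩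
      have : k - 1 + 1 = k := by omega
      rw [this]; exact hkdvd
    · rintro ⟨d, ⟨hd, hdsub⟩, rfl⟩
      exact ⟨hdsub, hg.ne'⟩
  have := Nat.sum_totient g
  rw [hset, Finset.sum_map] at this
  change ∑ x ∈ _, ((x + 1).totient) = g at this
  exact_mod_cast this

/-- Smith's determinant, 1875: the determinant of the matrix
`[gcd(i,j)]_{1 ≤ i,j ≤ n}` equals `φ(1) * φ(2) * ⋯ * φ(n)`. -/
theorem stmt_16 (n : ℕ) (hn : 0 < n) :
    Matrix.det (Matrix.of fun i j : Fin n => ((Nat.gcd (i.1 + 1) (j.1 + 1) : ℕ) : ℤ))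
      = ∏ k ∈ Finset.Icc 1 n, (Nat.totient k : ℤ) := by
  set A : Matrix (Fin n) (Fin n) ℤ :=
    Matrix.of fun i d : Fin n => if (d.1 + 1) ∣ (i.1 + 1) then 1 else 0 with hA
  set D : Matrix (Fin n) (Fin n) ℤ :=
    Matrix.diagonal fun d : Fin n => (Nat.totient (d.1 + 1) : ℤ) with hD
  have hM : Matrix.of (fun i j : Fin n => ((Nat.gcd (i.1 + 1) (j.1 + 1) : ℕ) : ℤ))
      = A * D * Aᵀ := by
    ext i j
    have hpos : 0 < Nat.gcd (i.1 + 1) (j.1 + 1) := Nat.gcd_pos_of_pos_left _ (by omega)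
    have hle : Nat.gcd (i.1 + 1) (j.1 + 1) ≤ n :=
      le_trans (Nat.le_of_dvd (by omega) (Nat.gcd_dvd_left _ _)) i.2
    rw [Matrix.mul_assoc, Matrix.mul_apply]
    simp only [hA, hD, Matrix.diagonal_mul, Matrix.transpose_apply, Matrix.of_apply]
    rw [← key_sum (Nat.gcd (i.1 + 1) (j.1 + 1)) n hpos hle, ← Fin.sum_univ_eq_sum_range]
    apply Finset.sum_congr rfl
    intro d _
    by_cases h1 : (d.1 + 1) ∣ (i.1 + 1) <;> by_cases h2 : (d.1 + 1) ∣ (j.1 + 1) <;>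
      simp [h1, h2, Nat.dvd_gcd_iff, Matrix.diagonal_apply, Finset.sum_ite_eq, Finset.sum_ite_eq']
  rw [hM, Matrix.det_mul, Matrix.det_mul]
  have hAdet : A.det = 1 := by
    rw [Matrix.det_of_lowerTriangular A]
    · simp [hA]
    · intro i j hij
      simp only [hA, Matrix.of_apply, ite_eq_right_iff]
      intro hdvd
      exfalso
      have := Nat.le_of_dvd (by omega) hdvd
      simp [Matrix.BlockTriangular] at hij
      omega
  rw [hAdet, Matrix.det_transpose, hAdet, Matrix.det_diagonal, one_mul, mul_one]
  rw [Fin.prod_univ_eq_prod_range (fun d => (Nat.totient (d + 1) : ℤ))]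
  rw [show Finset.Icc 1 n = Finset.Ico 1 (n + 1) by rw [Finset.Ico_add_one_right_eq_Icc],
    Finset.prod_Ico_eq_prod_range]
  simp [add_comm]
end
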